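/- arXiv:2103.07954 — 3 statements merged into one kernel-verified Lean document; each statement's English description precedes it below -/
import Mathlib

section
/- Consider the system C₂ with within-context distributions: in context c¹, P(R₁¹=+1,R₂¹=+1)=a, P(R₁¹=+1,R₂¹=−1)=0, P(R₁¹=−1,R₂¹=+1)=b−a, P(R₁¹=−1,R₂¹=−1)=1−b; in context c², P(R₁²=+1,R₂²=+1)=0, P(R₁²=+1,R₂²=−1)=a, P(R₁²=−1,R₂²=+1)=b, P(R₁²=−1,R₂²=−1)=1−a−b, where 0<a≤b and a+b≤1. Then in every coupling (S₁¹,S₂¹,S₁²,S₂²) of the system, P(S₁¹≠S₁²)+P(S₂¹≠S₂²)>0; i.e., the system is contextual. -/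
/-- The system `C₂(a)` with within-context distributions
`(a, 0, b−a, 1−b)` in context 1 and `(0, a, b, 1−a−b)` in context 2
(with `0 < a ≤ b`, `a+b ≤ 1`) is contextual: in every coupling,
`P(S₁¹≠S₁²) + P(S₂¹≠S₂²) > 0`. Variables are `Bool`-valued, `true` = +1;
`p s11 s21 s12 s22` is the coupling distribution on `{+1,−1}⁴`. -/
theorem system_C2a_contextual (a b : ℝ) (ha : 0 < a) (hab : a ≤ b) (hab1 : a + b ≤ 1)
    (p : Bool → Bool → Bool → Bool → ℝ)
    (hpos : ∀ s11 s21 s12 s22, 0 ≤ p s11 s21 s12 s22)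
    (hm1tt : (∑ s12, ∑ s22, p true true s12 s22) = a)
    (hm1tf : (∑ s12, ∑ s22, p true false s12 s22) = 0)
    (hm1ft : (∑ s12, ∑ s22, p false true s12 s22) = b - a)
    (hm1ff : (∑ s12, ∑ s22, p false false s12 s22) = 1 - b)
    (hm2tt : (∑ s11, ∑ s21, p s11 s21 true true) = 0)
    (hm2tf : (∑ s11, ∑ s21, p s11 s21 true false) = a)
    (hm2ft : (∑ s11, ∑ s21, p s11 s21 false true) = b)
    (hm2ff : (∑ s11, ∑ s21, p s11 s21 false false) = 1 - a - b) :
    0 < (∑ s21, ∑ s22, (p true s21 false s22 + p false s21 true s22))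
      + (∑ s11, ∑ s12, (p s11 true s12 false + p s11 false s12 true)) := by
  simp only [Fintype.sum_bool] at *
  linarith [hpos true true true true, hpos true true true false, hpos true true false true,
    hpos true true false false, hpos true false true true, hpos true false false false,
    hpos false true true true, hpos false true false false, hpos false false true true,
    hpos false false false false, hpos true false true false, hpos true false false true,
    hpos false true true false, hpos false true false true, hpos false false true false,
    hpos false false false true]
end

section
/- A cyclic system of rank 2 with expectations ⟨R₁¹⟩, ⟨R₂¹⟩, ⟨R₁²⟩, ⟨R₂²⟩ and products ⟨R₁¹R₂¹⟩, ⟨R₁²R₂²⟩ is contextual if and only if |⟨R₁¹R₂¹⟩−⟨R₁²R₂²⟩| > |⟨R₁¹⟩−⟨R₁²⟩| + |⟨R₂¹⟩−⟨R₂²⟩|, where contextual means that the minimum over all couplings of P(S₁¹≠S₁²)+P(S₂¹≠S₂²) exceeds (|a₁−a₂|+|b₁−b₂|), with a_j, b_j the +1-probabilities. -/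
lemma cyclic_core (r1 r2 : Bool → Bool → ℝ)
    (h1 : ∀ x y, 0 ≤ r1 x y) (h2 : ∀ x y, 0 ≤ r2 x y)
    (hs1 : r1 true true + r1 true false + r1 false true + r1 false false = 1)
    (hs2 : r2 true true + r2 true false + r2 false true + r2 false false = 1)
    (ha : r2 true true + r2 true false ≤ r1 true true + r1 true false)
    (hb : r2 true true + r2 false true ≤ r1 true true + r1 false true)
    (hA : r2 true true ≤ r1 true true)
    (hD : r1 false false ≤ r2 false false) :
    ∃ p : Bool → Bool → Bool → Bool → ℝ,
      (∀ a b c d, 0 ≤ p a b c d) ∧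
      (∀ a b, p a b true true + p a b true false + p a b false true + p a b false false
          = r1 a b) ∧
      (∀ c d, p true true c d + p true false c d + p false true c d + p false false c d
          = r2 c d) ∧
      (p true true false true + p true true false false
        + p true false false true + p true false false false
        + p false true true true + p false true true false
        + p false false true true + p false false true false
        = (r1 true true + r1 true false) - (r2 true true + r2 true false)) ∧
      (p true true true false + p true true false false
        + p false true true false + p false true false false
        + p true false true true + p true false false true
        + p false false true true + p false false false true
        = (r1 true true + r1 false true) - (r2 true true + r2 false true)) := by
  have hmax : ∀ x : ℝ, max x 0 = x + max (-x) 0 := by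
    intro x
    rcases le_total x 0 with h | h
    · rw [max_eq_right h, max_eq_left (by linarith : (0:ℝ) ≤ -x)]; ring
    · rw [max_eq_left h, max_eq_right (by linarith : -x ≤ 0)]; ring
  have k0 : 0 ≤ r1 true true - r2 true true - max (r2 true false - r1 true false) 0
      - max (r2 false true - r1 false true) 0 := by
    rcases le_total (r2 true false) (r1 true false) with h | h <;>
      rcases le_total (r2 false true) (r1 false true) with h' | h'
    · rw [max_eq_right (by linarith), max_eq_right (by linarith)]; linarith
    · rw [max_eq_right (by linarith), max_eq_left (by linarith)]; linarith
    · rw [max_eq_left (by linarith), max_eq_right (by linarith)]; linarith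
    · rw [max_eq_left (by linarith), max_eq_left (by linarith)]; linarith
  have k2 : 0 ≤ r2 true false - max (r2 true false - r1 true false) 0 := by
    rcases le_total (r2 true false) (r1 true false) with h | h
    · rw [max_eq_right (by linarith)]; linarith [h2 true false]
    · rw [max_eq_left (by linarith)]; linarith [h1 true false]
  have k3 : 0 ≤ r2 false true - max (r2 false true - r1 false true) 0 := by
    rcases le_total (r2 false true) (r1 false true) with h | h
    · rw [max_eq_right (by linarith)]; linarith [h2 false true]
    · rw [max_eq_left (by linarith)]; linarith [h1 false true]
  refine ⟨fun x1 y1 x2 y2 => match x1, y1, x2, y2 with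
    | true, true, true, true => r2 true true
    | true, true, true, false => max (r2 true false - r1 true false) 0
    | true, true, false, true => max (r2 false true - r1 false true) 0
    | true, true, false, false => r1 true true - r2 true true
        - max (r2 true false - r1 true false) 0 - max (r2 false true - r1 false true) 0
    | true, false, true, false => r2 true false - max (r2 true false - r1 true false) 0
    | true, false, false, false => max (r1 true false - r2 true false) 0
    | false, true, false, true => r2 false true - max (r2 false true - r1 false true) 0
    | false, true, false, false => max (r1 false true - r2 false true) 0
    | false, false, false, false => r1 false false
    | _, _, _, _ => 0, ?_, ?_, ?_, ?_, ?_⟩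
  · intro a b c d
    cases a <;> cases b <;> cases c <;> cases d <;> simp only [] <;>
      first
        | exact le_max_right _ _
        | exact le_refl 0
        | exact h2 true true
        | exact h1 false false
        | exact k0
        | exact k2
        | exact k3
  · intro a b
    cases a <;> cases b <;> simp only []
    · ring
    · rw [hmax (r1 false true - r2 false true),
        show -(r1 false true - r2 false true) = r2 false true - r1 false true by ring]
      ring
    · rw [hmax (r1 true false - r2 true false),
        show -(r1 true false - r2 true false) = r2 true false - r1 true false by ring]
      ring
    · ring
  · intro c d
    cases c <;> cases d <;> simp only []
    · rw [hmax (r1 true false - r2 true false),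
        show -(r1 true false - r2 true false) = r2 true false - r1 true false by ring,
        hmax (r1 false true - r2 false true),
        show -(r1 false true - r2 false true) = r2 false true - r1 false true by ring]
      linarith
    · ring
    · ring
    · ring
  · simp only []
    rw [hmax (r1 true false - r2 true false),
      show -(r1 true false - r2 true false) = r2 true false - r1 true false by ring]
    ring
  · simp only []
    rw [hmax (r1 false true - r2 false true),
      show -(r1 false true - r2 false true) = r2 false true - r1 false true by ring]
    ring

lemma cyclic_wrap (r1 r2 : Bool → Bool → ℝ)
    (h1 : ∀ x y, 0 ≤ r1 x y) (h2 : ∀ x y, 0 ≤ r2 x y)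
    (hs1 : r1 true true + r1 true false + r1 false true + r1 false false = 1)
    (hs2 : r2 true true + r2 true false + r2 false true + r2 false false = 1)
    (hab : |(r1 true true - r1 true false - r1 false true + r1 false false)
        - (r2 true true - r2 true false - r2 false true + r2 false false)|
      ≤ 2 * |(r1 true true + r1 true false) - (r2 true true + r2 true false)|
        + 2 * |(r1 true true + r1 false true) - (r2 true true + r2 false true)|) :
    ∃ p : Bool → Bool → Bool → Bool → ℝ,
      (∀ a b c d, 0 ≤ p a b c d) ∧
      (∀ a b, p a b true true + p a b true false + p a b false true + p a b false false
          = r1 a b) ∧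
      (∀ c d, p true true c d + p true false c d + p false true c d + p false false c d
          = r2 c d) ∧
      (p true true false true + p true true false false
        + p true false false true + p true false false false
        + p false true true true + p false true true false
        + p false false true true + p false false true false
        = |(r1 true true + r1 true false) - (r2 true true + r2 true false)|) ∧
      (p true true true false + p true true false false
        + p false true true false + p false true false false
        + p true false true true + p true false false true
        + p false false true true + p false false false true
        = |(r1 true true + r1 false true) - (r2 true true + r2 false true)|) := by
  have hup : (r1 true true - r1 true false - r1 false true + r1 false false)
        - (r2 true true - r2 true false - r2 false true + r2 false false)
      ≤ 2 * |(r1 true true + r1 true false) - (r2 true true + r2 true false)|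
        + 2 * |(r1 true true + r1 false true) - (r2 true true + r2 false true)| :=
    (le_abs_self _).trans hab
  have hdn : -(2 * |(r1 true true + r1 true false) - (r2 true true + r2 true false)|
        + 2 * |(r1 true true + r1 false true) - (r2 true true + r2 false true)|)
      ≤ (r1 true true - r1 true false - r1 false true + r1 false false)
        - (r2 true true - r2 true false - r2 false true + r2 false false) := by
    linarith [neg_abs_le ((r1 true true - r1 true false - r1 false true + r1 false false)
        - (r2 true true - r2 true false - r2 false true + r2 false false))]
  rcases le_total (r2 true true + r2 true false) (r1 true true + r1 true false) with hx | hx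
  · rcases le_total (r2 true true + r2 false true) (r1 true true + r1 false true) with hy | hy
    · -- no flip
      have ax : |(r1 true true + r1 true false) - (r2 true true + r2 true false)|
          = (r1 true true + r1 true false) - (r2 true true + r2 true false) :=
        abs_of_nonneg (by linarith)
      have ay : |(r1 true true + r1 false true) - (r2 true true + r2 false true)|
          = (r1 true true + r1 false true) - (r2 true true + r2 false true) :=
        abs_of_nonneg (by linarith)
      obtain ⟨p, pn, m1, m2, c1, c2⟩ := cyclic_core r1 r2 h1 h2 hs1 hs2
        (by linarith) (by linarith) (by linarith) (by linarith)
      exact ⟨p, pn, m1, m2, by rw [ax]; linarith [c1], by rw [ay]; linarith [c2]⟩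
    · -- y flip
      have ax : |(r1 true true + r1 true false) - (r2 true true + r2 true false)|
          = (r1 true true + r1 true false) - (r2 true true + r2 true false) :=
        abs_of_nonneg (by linarith)
      have ay : |(r1 true true + r1 false true) - (r2 true true + r2 false true)|
          = -((r1 true true + r1 false true) - (r2 true true + r2 false true)) :=
        abs_of_nonpos (by linarith)
      obtain ⟨p, pn, m1, m2, c1, c2⟩ := cyclic_core
        (fun x y => r1 x (!y)) (fun x y => r2 x (!y))
        (fun x y => h1 _ _) (fun x y => h2 _ _)
        (by simp only [Bool.not_true, Bool.not_false]; linarith)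
        (by simp only [Bool.not_true, Bool.not_false]; linarith)
        (by simp only [Bool.not_true, Bool.not_false]; linarith)
        (by simp only [Bool.not_true, Bool.not_false]; linarith)
        (by simp only [Bool.not_true, Bool.not_false]; linarith)
        (by simp only [Bool.not_true, Bool.not_false]; linarith)
      have m1tt := m1 true true
      have m1tf := m1 true false
      have m1ft := m1 false true
      have m1ff := m1 false false
      have m2tt := m2 true true
      have m2tf := m2 true false
      have m2ft := m2 false true
      have m2ff := m2 false false
      simp only [Bool.not_true, Bool.not_false] at m1tt m1tf m1ft m1ff m2tt m2tf m2ft m2ff c1 c2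
      refine ⟨fun x1 y1 x2 y2 => p x1 (!y1) x2 (!y2), fun a b c d => pn _ _ _ _, ?_, ?_, ?_, ?_⟩
      · intro a b
        cases a <;> cases b <;> simp only [Bool.not_true, Bool.not_false] <;>
          linarith [m1tt, m1tf, m1ft, m1ff]
      · intro c d
        cases c <;> cases d <;> simp only [Bool.not_true, Bool.not_false] <;>
          linarith [m2tt, m2tf, m2ft, m2ff]
      · simp only [Bool.not_true, Bool.not_false]
        rw [ax]; linarith [c1]
      · simp only [Bool.not_true, Bool.not_false]
        rw [ay]; linarith [c2]
  · rcases le_total (r2 true true + r2 false true) (r1 true true + r1 false true) with hy | hy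
    · -- x flip
      have ax : |(r1 true true + r1 true false) - (r2 true true + r2 true false)|
          = -((r1 true true + r1 true false) - (r2 true true + r2 true false)) :=
        abs_of_nonpos (by linarith)
      have ay : |(r1 true true + r1 false true) - (r2 true true + r2 false true)|
          = (r1 true true + r1 false true) - (r2 true true + r2 false true) :=
        abs_of_nonneg (by linarith)
      obtain ⟨p, pn, m1, m2, c1, c2⟩ := cyclic_core
        (fun x y => r1 (!x) y) (fun x y => r2 (!x) y)
        (fun x y => h1 _ _) (fun x y => h2 _ _)
        (by simp only [Bool.not_true, Bool.not_false]; linarith)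
        (by simp only [Bool.not_true, Bool.not_false]; linarith)
        (by simp only [Bool.not_true, Bool.not_false]; linarith)
        (by simp only [Bool.not_true, Bool.not_false]; linarith)
        (by simp only [Bool.not_true, Bool.not_false]; linarith)
        (by simp only [Bool.not_true, Bool.not_false]; linarith)
      have m1tt := m1 true true
      have m1tf := m1 true false
      have m1ft := m1 false true
      have m1ff := m1 false false
      have m2tt := m2 true true
      have m2tf := m2 true false
      have m2ft := m2 false true
      have m2ff := m2 false false
      simp only [Bool.not_true, Bool.not_false] at m1tt m1tf m1ft m1ff m2tt m2tf m2ft m2ff c1 c2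
      refine ⟨fun x1 y1 x2 y2 => p (!x1) y1 (!x2) y2, fun a b c d => pn _ _ _ _, ?_, ?_, ?_, ?_⟩
      · intro a b
        cases a <;> cases b <;> simp only [Bool.not_true, Bool.not_false] <;>
          linarith [m1tt, m1tf, m1ft, m1ff]
      · intro c d
        cases c <;> cases d <;> simp only [Bool.not_true, Bool.not_false] <;>
          linarith [m2tt, m2tf, m2ft, m2ff]
      · simp only [Bool.not_true, Bool.not_false]
        rw [ax]; linarith [c1]
      · simp only [Bool.not_true, Bool.not_false]
        rw [ay]; linarith [c2]
    · -- both flips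
      have ax : |(r1 true true + r1 true false) - (r2 true true + r2 true false)|
          = -((r1 true true + r1 true false) - (r2 true true + r2 true false)) :=
        abs_of_nonpos (by linarith)
      have ay : |(r1 true true + r1 false true) - (r2 true true + r2 false true)|
          = -((r1 true true + r1 false true) - (r2 true true + r2 false true)) :=
        abs_of_nonpos (by linarith)
      obtain ⟨p, pn, m1, m2, c1, c2⟩ := cyclic_core
        (fun x y => r1 (!x) (!y)) (fun x y => r2 (!x) (!y))
        (fun x y => h1 _ _) (fun x y => h2 _ _)
        (by simp only [Bool.not_true, Bool.not_false]; linarith)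
        (by simp only [Bool.not_true, Bool.not_false]; linarith)
        (by simp only [Bool.not_true, Bool.not_false]; linarith)
        (by simp only [Bool.not_true, Bool.not_false]; linarith)
        (by simp only [Bool.not_true, Bool.not_false]; linarith)
        (by simp only [Bool.not_true, Bool.not_false]; linarith)
      have m1tt := m1 true true
      have m1tf := m1 true false
      have m1ft := m1 false true
      have m1ff := m1 false false
      have m2tt := m2 true true
      have m2tf := m2 true false
      have m2ft := m2 false true
      have m2ff := m2 false false
      simp only [Bool.not_true, Bool.not_false] at m1tt m1tf m1ft m1ff m2tt m2tf m2ft m2ff c1 c2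
      refine ⟨fun x1 y1 x2 y2 => p (!x1) (!y1) (!x2) (!y2), fun a b c d => pn _ _ _ _,
        ?_, ?_, ?_, ?_⟩
      · intro a b
        cases a <;> cases b <;> simp only [Bool.not_true, Bool.not_false] <;>
          linarith [m1tt, m1tf, m1ft, m1ff]
      · intro c d
        cases c <;> cases d <;> simp only [Bool.not_true, Bool.not_false] <;>
          linarith [m2tt, m2tf, m2ft, m2ff]
      · simp only [Bool.not_true, Bool.not_false]
        rw [ax]; linarith [c1]
      · simp only [Bool.not_true, Bool.not_false]
        rw [ay]; linarith [c2]

lemma two_center_abs (u v : ℝ) : |(2 * u - 1) - (2 * v - 1)| = 2 * |u - v| := by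
  rw [show (2 * u - 1) - (2 * v - 1) = 2 * (u - v) by ring, abs_mul, abs_two]

/-- Criterion of contextuality for cyclic systems of rank 2: the system is
contextual (every coupling has `P(S₁¹≠S₁²)+P(S₂¹≠S₂²) > |a₁−a₂|+|b₁−b₂|`)
if and only if `|⟨R₁¹R₂¹⟩ − ⟨R₁²R₂²⟩| > |⟨R₁¹⟩−⟨R₁²⟩| + |⟨R₂¹⟩−⟨R₂²⟩|`,
with `⟨R⟩ = 2P(R=+1) − 1`. -/
theorem cyclic_rank2_criterion (q1 q2 : Bool → Bool → ℝ) (a1 b1 a2 b2 e1 e2 : ℝ)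
    (h1pos : ∀ x y, 0 ≤ q1 x y) (h2pos : ∀ x y, 0 ≤ q2 x y)
    (h1sum : (∑ x, ∑ y, q1 x y) = 1) (h2sum : (∑ x, ∑ y, q2 x y) = 1)
    (ha1 : a1 = q1 true true + q1 true false)
    (hb1 : b1 = q1 true true + q1 false true)
    (ha2 : a2 = q2 true true + q2 true false)
    (hb2 : b2 = q2 true true + q2 false true)
    (he1 : e1 = q1 true true - q1 true false - q1 false true + q1 false false)
    (he2 : e2 = q2 true true - q2 true false - q2 false true + q2 false false) :
    (∀ p : Bool → Bool → Bool → Bool → ℝ,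
      (∀ x1 y1 x2 y2, 0 ≤ p x1 y1 x2 y2) →
      (∀ x1 y1, (∑ x2, ∑ y2, p x1 y1 x2 y2) = q1 x1 y1) →
      (∀ x2 y2, (∑ x1, ∑ y1, p x1 y1 x2 y2) = q2 x2 y2) →
      |a1 - a2| + |b1 - b2| <
        (∑ y1, ∑ y2, (p true y1 false y2 + p false y1 true y2))
        + (∑ x1, ∑ x2, (p x1 true x2 false + p x1 false x2 true)))
    ↔ |e1 - e2| > |(2 * a1 - 1) - (2 * a2 - 1)| + |(2 * b1 - 1) - (2 * b2 - 1)| := by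
  subst ha1 hb1 ha2 hb2 he1 he2
  have hra := two_center_abs (q1 true true + q1 true false) (q2 true true + q2 true false)
  have hrb := two_center_abs (q1 true true + q1 false true) (q2 true true + q2 false true)
  simp only [Fintype.sum_bool] at h1sum h2sum
  constructor
  · intro H
    by_contra hc
    push_neg at hc
    obtain ⟨p, pn, m1, m2, c1, c2⟩ := cyclic_wrap q1 q2 h1pos h2pos
      (by linarith) (by linarith) (by linarith [hc, hra, hrb])
    have hH := H p pn (fun a b => by simp only [Fintype.sum_bool]; linarith [m1 a b])
      (fun c d => by simp only [Fintype.sum_bool]; linarith [m2 c d])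
    simp only [Fintype.sum_bool] at hH
    linarith [hH, c1, c2]
  · intro hRHS p pn m1 m2
    simp only [Fintype.sum_bool] at m1 m2 ⊢
    rcases abs_cases ((q1 true true - q1 true false - q1 false true + q1 false false)
        - (q2 true true - q2 true false - q2 false true + q2 false false)) with ⟨hE, _⟩ | ⟨hE, _⟩ <;>
      rcases abs_cases ((q1 true true + q1 true false)
        - (q2 true true + q2 true false)) with ⟨hX, _⟩ | ⟨hX, _⟩ <;>
      rcases abs_cases ((q1 true true + q1 false true)
        - (q2 true true + q2 false true)) with ⟨hY, _⟩ | ⟨hY, _⟩ <;>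
      linarith [hRHS, hra, hrb, hE, hX, hY,
        m1 true true, m1 true false, m1 false true, m1 false false,
        m2 true true, m2 true false, m2 false true, m2 false false,
        pn true true true true, pn true true true false, pn true true false true,
        pn true true false false, pn true false true true, pn true false true false,
        pn true false false true, pn true false false false, pn false true true true,
        pn false true true false, pn false true false true, pn false true false false,
        pn false false true true, pn false false true false, pn false false false true,
        pn false false false false]
end

section
/- The bipartite Liar system C₂ with contexts c¹ (perfect correlation: P(R₁¹=R₂¹)=1, uniform marginals) and c² (perfect anticorrelation: P(R₁²=−R₂²)=1, uniform marginals) is contextual, and the minimum over couplings of P(S₁¹≠S₁²)+P(S₂¹≠S₂²) equals 1. -/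
lemma liar_lower (p : Bool → Bool → Bool → Bool → ℝ)
    (hpos : ∀ s11 s21 s12 s22, 0 ≤ p s11 s21 s12 s22)
    (h1 : ∀ x y : Bool, (∑ s12, ∑ s22, p x y s12 s22) = if x = y then (1 : ℝ) / 2 else 0)
    (h2 : ∀ x y : Bool, (∑ s11, ∑ s21, p s11 s21 x y) = if x = y then 0 else (1 : ℝ) / 2) :
    1 ≤ (∑ s21, ∑ s22, (p true s21 false s22 + p false s21 true s22))
      + (∑ s11, ∑ s12, (p s11 true s12 false + p s11 false s12 true)) := by
  have a1 := h1 true false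
  have a2 := h1 false true
  have a3 := h1 true true
  have a4 := h1 false false
  have b1 := h2 true true
  have b2 := h2 false false
  simp only [Fintype.sum_bool, if_true, if_false] at a1 a2 a3 a4 b1 b2 ⊢
  norm_num at a1 a2 a3 a4 b1 b2
  have n := fun a b c d => hpos a b c d
  linarith [hpos true true true true, hpos true true true false, hpos true true false true,
    hpos true true false false, hpos true false true true, hpos true false true false,
    hpos true false false true, hpos true false false false, hpos false true true true,
    hpos false true true false, hpos false true false true, hpos false true false false,
    hpos false false true true, hpos false false true false, hpos false false false true,
    hpos false false false false]

/-- The bipartite Liar system `C₂` (context 1: perfect correlation with uniform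
marginals; context 2: perfect anticorrelation with uniform marginals) is
contextual, and the minimum over couplings of `P(S₁¹≠S₁²)+P(S₂¹≠S₂²)` equals 1.
A coupling is `p s11 s21 s12 s22` on `{+1,−1}⁴`. -/
theorem bipartite_liar_contextual :
    (∀ p : Bool → Bool → Bool → Bool → ℝ,
      (∀ s11 s21 s12 s22, 0 ≤ p s11 s21 s12 s22) →
      (∀ x y : Bool, (∑ s12, ∑ s22, p x y s12 s22) = if x = y then (1 : ℝ) / 2 else 0) →
      (∀ x y : Bool, (∑ s11, ∑ s21, p s11 s21 x y) = if x = y then 0 else (1 : ℝ) / 2) →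
      0 < (∑ s21, ∑ s22, (p true s21 false s22 + p false s21 true s22))
        + (∑ s11, ∑ s12, (p s11 true s12 false + p s11 false s12 true))) ∧
    IsLeast {m : ℝ | ∃ p : Bool → Bool → Bool → Bool → ℝ,
      (∀ s11 s21 s12 s22, 0 ≤ p s11 s21 s12 s22) ∧
      (∀ x y : Bool, (∑ s12, ∑ s22, p x y s12 s22) = if x = y then (1 : ℝ) / 2 else 0) ∧
      (∀ x y : Bool, (∑ s11, ∑ s21, p s11 s21 x y) = if x = y then 0 else (1 : ℝ) / 2) ∧
      m = (∑ s21, ∑ s22, (p true s21 false s22 + p false s21 true s22))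
        + (∑ s11, ∑ s12, (p s11 true s12 false + p s11 false s12 true))} 1 := by
  constructor
  · intro p hpos h1 h2
    have := liar_lower p hpos h1 h2
    linarith
  constructor
  · -- membership: product coupling
    refine ⟨fun a b c d => (if a = b then (1:ℝ)/2 else 0) * (if c = d then 0 else (1:ℝ)/2),
      ?_, ?_, ?_, ?_⟩
    · intro a b c d
      positivity
    · intro x y
      simp only [Fintype.sum_bool]
      cases x <;> cases y <;> norm_num
    · intro x y
      simp only [Fintype.sum_bool]
      cases x <;> cases y <;> norm_num
    · simp only [Fintype.sum_bool]
      norm_num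
  · rintro m ⟨p, hpos, h1, h2, rfl⟩
    exact liar_lower p hpos h1 h2
end
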